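/- PSL(2,ℤ) admits the presentation ⟨a, b | aba = bab, ababab = 1⟩, via a ↦ class of [[1,-1],[0,1]] and b ↦ class of [[1,0],[1,1]]. -/

import Mathlib

abbrev SL2Z := Matrix.SpecialLinearGroup (Fin 2) ℤ

instance : Fact (Even (Fintype.card (Fin 2))) := ⟨by decide⟩

/-- The subgroup `{±I}` of `SL(2,ℤ)`. -/
def pmI : Subgroup SL2Z := Subgroup.zpowers (-1 : SL2Z)

instance : pmI.Normal := by
  constructor
  intro x hx g
  obtain ⟨k, rfl⟩ := hx
  have hc : ∀ h : SL2Z, (-1 : SL2Z) ^ k * h = h * (-1 : SL2Z) ^ k := fun h =>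
    ((Commute.neg_one_left h).zpow_left k).eq
  rw [← hc g, mul_assoc, mul_inv_cancel, mul_one]
  exact ⟨k, rfl⟩

/-- `PSL(2,ℤ) = SL(2,ℤ)/{±I}`. -/
abbrev PSL2Z := SL2Z ⧸ pmI

def A : SL2Z := ⟨!![1, -1; 0, 1], by decide⟩
def B : SL2Z := ⟨!![1, 0; 1, 1], by decide⟩

/-- The relations `aba(bab)⁻¹` and `ababab` in the free group on two generators. -/
def rels : Set (FreeGroup Bool) :=
  letI a := FreeGroup.of true
  letI b := FreeGroup.of false
  {a * b * a * (b * a * b)⁻¹, a * b * a * b * a * b}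

/-!
In `PSL(2,ℤ)` the classes `s` of `S` and `u` of `ST` have orders 2 and 3, and they play ping-pong
on the upper half-plane: `s` maps `Re z < 0` into `Re z > 0`, while `u` and `u² = T⁻¹S` map
`Re z > 0` into `Re z < 0`. Hence they generate a copy of `ℤ/2 ∗ ℤ/3`. In the presented group,
`x = aba` and `y = ab` satisfy `x² = y³ = 1` and generate it (`a = y⁻¹x`, `b = x⁻¹y²`), so it is a
quotient of `ℤ/2 ∗ ℤ/3`. The map `a ↦ ±A`, `b ↦ ±B` sends `x, y` to `s, u`, so composed with that
quotient map it is the injective ping-pong map; and it is onto since `S = ABA` and `T = A⁻¹`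
generate `SL(2,ℤ)`.
-/

section Cyclic

variable {G H : Type*} [Group G] [Group H] {n : ℕ}

def cyclicLift (g : G) (hg : g ^ n = 1) : Multiplicative (ZMod n) →* G :=
  AddMonoidHom.toMultiplicativeLeft
    (ZMod.lift n ⟨zmultiplesHom (Additive G) (Additive.ofMul g), by simp [← ofMul_pow, hg]⟩)

@[simp]
lemma cyclicLift_ofAdd_intCast (g : G) (hg : g ^ n = 1) (k : ℤ) :
    cyclicLift g hg (.ofAdd k) = g ^ k := by
  simp [cyclicLift, ZMod.lift_coe]

@[simp]
lemma cyclicLift_ofAdd_one (g : G) (hg : g ^ n = 1) : cyclicLift g hg (.ofAdd 1) = g := by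
  simpa using cyclicLift_ofAdd_intCast g hg 1

lemma cyclicLift_apply [NeZero n] (g : G) (hg : g ^ n = 1) (h : Multiplicative (ZMod n)) :
    cyclicLift g hg h = g ^ h.toAdd.val := by
  have := cyclicLift_ofAdd_intCast g hg h.toAdd.val
  rwa [Int.cast_natCast, ZMod.natCast_zmod_val, ofAdd_toAdd, zpow_natCast] at this

lemma map_comp_cyclicLift (φ : G →* H) (g : G) (hg : g ^ n = 1) :
    φ.comp (cyclicLift g hg) = cyclicLift (φ g) (by rw [← map_pow, hg, map_one]) := by
  ext k
  obtain ⟨m, rfl⟩ := ZMod.intCast_surjective k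
  simp

end Cyclic

abbrev CyclicPair (m n : ℕ) : Bool → Type := fun i => Multiplicative (ZMod (bif i then m else n))

section FreeProduct

open Monoid Pointwise

variable {G H : Type*} [Group G] [Group H] {m n : ℕ} (x y : G) (hx : x ^ m = 1) (hy : y ^ n = 1)

def liftCyclicPair : CoprodI (CyclicPair m n) →* G :=
  CoprodI.lift fun
    | true => cyclicLift x hx
    | false => cyclicLift y hy

lemma map_comp_liftCyclicPair (φ : G →* H) :
    φ.comp (liftCyclicPair x y hx hy) =
      liftCyclicPair (φ x) (φ y) (by rw [← map_pow, hx, map_one])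
        (by rw [← map_pow, hy, map_one]) := by
  refine CoprodI.ext_hom _ _ fun i => ?_
  cases i <;> simp [liftCyclicPair, MonoidHom.comp_assoc, map_comp_cyclicLift]

lemma liftCyclicPair_surjective (hxy : Subgroup.closure {x, y} = ⊤) :
    Function.Surjective (liftCyclicPair x y hx hy) := by
  rw [← MonoidHom.range_eq_top, eq_top_iff, ← hxy, Subgroup.closure_le, Set.pair_subset_iff]
  exact ⟨⟨CoprodI.of (i := true) (.ofAdd 1), by simp [liftCyclicPair]⟩,
    ⟨CoprodI.of (i := false) (.ofAdd 1), by simp [liftCyclicPair]⟩⟩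

lemma liftCyclicPair_injective [NeZero m] (hn : 3 ≤ n) {α : Type*} [MulAction G α] {X Y : Set α}
    (hX : X.Nonempty) (hY : Y.Nonempty) (hXY : Disjoint X Y)
    (hxY : ∀ k, 0 < k → k < m → x ^ k • Y ⊆ X) (hyX : ∀ k, 0 < k → k < n → y ^ k • X ⊆ Y) :
    Function.Injective (liftCyclicPair x y hx hy) := by
  have : NeZero n := ⟨by omega⟩
  refine CoprodI.lift_injective_of_ping_pong _ (.inr ⟨false, ?_⟩) (fun i => bif i then X else Y)
    (fun i => by cases i <;> assumption) ?_ ?_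
  · simpa [Cardinal.mk_fintype] using hn
  · rintro (_ | _) (_ | _) hij
    all_goals simp_all [Function.onFun, hXY.symm]
  · rintro (_ | _) (_ | _) hij h h1
    all_goals simp only [ne_eq, reduceCtorEq, not_false_eq_true, not_true_eq_false] at hij
    · change Multiplicative (ZMod n) at h
      have hk : h.toAdd.val ≠ 0 := by simpa [ZMod.val_eq_zero] using h1
      simpa [liftCyclicPair, cyclicLift_apply] using hyX _ (by omega) (ZMod.val_lt _)
    · change Multiplicative (ZMod m) at h
      have hk : h.toAdd.val ≠ 0 := by simpa [ZMod.val_eq_zero] using h1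
      simpa [liftCyclicPair, cyclicLift_apply] using hxY _ (by omega) (ZMod.val_lt _)

end FreeProduct

lemma Subgroup.closure_mul_mul_pair {G : Type*} [Group G] (x y : G) :
    closure {x * y * x, x * y} = closure {x, y} := by
  have hx : x ∈ closure {x, y} := subset_closure (by simp)
  have hy : y ∈ closure {x, y} := subset_closure (by simp)
  have hxyx : x * y * x ∈ closure {x * y * x, x * y} := subset_closure (by simp)
  have hxy : x * y ∈ closure {x * y * x, x * y} := subset_closure (by simp)
  refine le_antisymm ?_ ?_ <;>
    rw [closure_le, Set.pair_subset_iff, SetLike.mem_coe, SetLike.mem_coe]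
  · exact ⟨mul_mem (mul_mem hx hy) hx, mul_mem hx hy⟩
  · constructor
    · convert mul_mem (inv_mem hxy) hxyx using 1; group
    · convert mul_mem (inv_mem hxyx) (mul_mem hxy hxy) using 1; group

open ModularGroup

lemma A_eq_T_inv : A = T⁻¹ := by decide

lemma A_mul_B_mul_A : A * B * A = S := by decide

lemma A_mul_B_mul_A_eq_B_mul_A_mul_B : A * B * A = B * A * B := by decide

lemma A_mul_B : A * B = S * T := by decide

lemma S_sq : S ^ 2 = -1 := by decide

lemma S_mul_T_pow_three : (S * T) ^ 3 = -1 := by decide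

lemma S_mul_T_sq : (S * T) ^ 2 = T⁻¹ * S := by decide

section Action

open UpperHalfPlane Pointwise

lemma re_S_smul (z : ℍ) : (S • z).re = -z.re / Complex.normSq z := by
  rw [← coe_re, modular_S_smul, coe_mk, Complex.inv_re, Complex.normSq_neg, Complex.neg_re, coe_re]

lemma pmI_le_ker_toPermHom : pmI ≤ (MulAction.toPermHom SL2Z ℍ).ker := by
  rw [pmI, Subgroup.zpowers_le]
  ext z
  simp

noncomputable instance : MulAction PSL2Z ℍ :=
  MulAction.compHom ℍ (QuotientGroup.lift pmI _ pmI_le_ker_toPermHom)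

lemma mk_smul (g : SL2Z) (z : ℍ) : (QuotientGroup.mk' pmI g) • z = g • z := rfl

lemma re_S_smul_pos {z : ℍ} (hz : z.re < 0) : 0 < (S • z).re := by
  rw [re_S_smul]
  exact div_pos (neg_pos.2 hz) (Complex.normSq_pos.2 z.ne_zero)

lemma re_S_smul_neg {z : ℍ} (hz : 0 < z.re) : (S • z).re < 0 := by
  rw [re_S_smul]
  exact div_neg_of_neg_of_pos (neg_neg_of_pos hz) (Complex.normSq_pos.2 z.ne_zero)

lemma mk_neg_one : QuotientGroup.mk' pmI (-1) = 1 :=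
  (QuotientGroup.eq_one_iff _).2 (Subgroup.mem_zpowers _)

lemma mk_S_sq : QuotientGroup.mk' pmI S ^ 2 = 1 := by
  rw [← map_pow, S_sq, mk_neg_one]

lemma mk_S_mul_T_pow_three : QuotientGroup.mk' pmI (S * T) ^ 3 = 1 := by
  rw [← map_pow, S_mul_T_pow_three, mk_neg_one]

lemma liftCyclicPair_S_ST_injective :
    Function.Injective (liftCyclicPair _ _ mk_S_sq mk_S_mul_T_pow_three) := by
  refine liftCyclicPair_injective _ _ _ _ le_rfl (X := {z : ℍ | 0 < z.re}) (Y := {z | z.re < 0})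
    ⟨(1 : ℝ) +ᵥ I, by simp⟩ ⟨(-1 : ℝ) +ᵥ I, by simp⟩ ?_ ?_ ?_
  · exact Set.disjoint_left.2 fun z (h : 0 < z.re) (h' : z.re < 0) => (h.trans h').false
  · intro k hk hk2
    obtain rfl : k = 1 := by omega
    rintro _ ⟨z, hz, rfl⟩
    exact re_S_smul_pos hz
  · intro k hk hk3
    interval_cases k
    · rintro _ ⟨z, hz, rfl⟩
      simp only [pow_one, mk_smul, mul_smul]
      exact re_S_smul_neg (by rw [re_T_smul]; linarith [hz.out])
    · rintro _ ⟨z, hz, rfl⟩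
      simp only [← map_pow, S_mul_T_sq, mk_smul, mul_smul, Set.mem_ofPred_eq, re_T_inv_smul]
      linarith [re_S_smul_neg hz.out]

end Action

lemma closure_mk_S_mk_T :
    Subgroup.closure {QuotientGroup.mk' pmI S, QuotientGroup.mk' pmI T} = ⊤ := by
  rw [← Set.image_pair, ← MonoidHom.map_closure, SpecialLinearGroup.SL2Z_generators,
    Subgroup.map_top_of_surjective _ (QuotientGroup.mk'_surjective _)]

lemma mk_A_mul_B_mul_A_eq :
    QuotientGroup.mk' pmI A * QuotientGroup.mk' pmI B * QuotientGroup.mk' pmI A =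
      QuotientGroup.mk' pmI B * QuotientGroup.mk' pmI A * QuotientGroup.mk' pmI B := by
  simp only [← map_mul, A_mul_B_mul_A_eq_B_mul_A_mul_B]

lemma mk_A_mul_B_pow_three : (QuotientGroup.mk' pmI A * QuotientGroup.mk' pmI B) ^ 3 = 1 := by
  rw [← map_mul, A_mul_B, mk_S_mul_T_pow_three]

section Presentation

open PresentedGroup

local notation "a" => PresentedGroup.of (rels := rels) true
local notation "b" => PresentedGroup.of (rels := rels) false

lemma aba_eq_bab : a * b * a = b * a * b := by
  have h := mk_eq_mk_of_mul_inv_mem (rels := rels) (Set.mem_insert _ _)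
  simp only [map_mul] at h
  exact h

lemma ab_pow_three : (a * b) ^ 3 = 1 := by
  have h := one_of_mem (rels := rels) (Set.mem_insert_of_mem _ rfl)
  simp only [map_mul] at h
  simp only [pow_three, ← mul_assoc]
  exact h

lemma aba_sq : (a * b * a) ^ 2 = 1 := by
  calc (a * b * a) ^ 2 = (a * b * a) * (b * a * b) := by rw [sq, aba_eq_bab]
    _ = (a * b) ^ 3 := by simp only [pow_three, mul_assoc]
    _ = 1 := ab_pow_three

lemma closure_aba_ab : Subgroup.closure {a * b * a, a * b} = ⊤ := by
  rw [Subgroup.closure_mul_mul_pair, ← closure_range_of rels, Bool.range_eq, Set.pair_comm]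

lemma toPSL2Z_rels : ∀ r ∈ rels, FreeGroup.lift
    (fun i => bif i then QuotientGroup.mk' pmI A else QuotientGroup.mk' pmI B) r = 1 := by
  rintro r (rfl | rfl)
  · simpa using mul_inv_eq_one.2 mk_A_mul_B_mul_A_eq
  · simpa [pow_three, mul_assoc] using mk_A_mul_B_pow_three

def toPSL2Z : PresentedGroup rels →* PSL2Z := toGroup toPSL2Z_rels

lemma toPSL2Z_a : toPSL2Z a = QuotientGroup.mk' pmI A := toGroup.of toPSL2Z_rels

lemma toPSL2Z_b : toPSL2Z b = QuotientGroup.mk' pmI B := toGroup.of toPSL2Z_rels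

lemma toPSL2Z_aba : toPSL2Z (a * b * a) = QuotientGroup.mk' pmI S := by
  rw [map_mul, map_mul, toPSL2Z_a, toPSL2Z_b, ← map_mul, ← map_mul, A_mul_B_mul_A]

lemma toPSL2Z_ab : toPSL2Z (a * b) = QuotientGroup.mk' pmI (S * T) := by
  rw [map_mul, toPSL2Z_a, toPSL2Z_b, ← map_mul, A_mul_B]

lemma toPSL2Z_comp_liftCyclicPair :
    toPSL2Z.comp (liftCyclicPair _ _ aba_sq ab_pow_three) =
      liftCyclicPair _ _ mk_S_sq mk_S_mul_T_pow_three := by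
  rw [map_comp_liftCyclicPair]
  congr 1
  exacts [toPSL2Z_aba, toPSL2Z_ab]

lemma toPSL2Z_injective : Function.Injective toPSL2Z := by
  refine .of_comp_right ?_ (liftCyclicPair_surjective _ _ aba_sq ab_pow_three closure_aba_ab)
  rw [← MonoidHom.coe_comp, toPSL2Z_comp_liftCyclicPair]
  exact liftCyclicPair_S_ST_injective

lemma toPSL2Z_surjective : Function.Surjective toPSL2Z := by
  rw [← MonoidHom.range_eq_top, eq_top_iff, ← closure_mk_S_mk_T, Subgroup.closure_le,
    Set.pair_subset_iff]
  refine ⟨⟨a * b * a, toPSL2Z_aba⟩, ⟨a⁻¹, ?_⟩⟩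
  rw [map_inv, toPSL2Z_a, A_eq_T_inv, map_inv, inv_inv]

end Presentation

theorem stmt4 :
    ∃ e : PresentedGroup rels ≃* PSL2Z,
      e (PresentedGroup.of true) = QuotientGroup.mk' pmI A ∧
      e (PresentedGroup.of false) = QuotientGroup.mk' pmI B :=
  ⟨.ofBijective toPSL2Z ⟨toPSL2Z_injective, toPSL2Z_surjective⟩, toPSL2Z_a, toPSL2Z_b⟩
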